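/- arXiv:2305.19372 — 5 statements merged into one kernel-verified Lean document; each statement's English description precedes it below -/
import Mathlib

section
/- If Y is a square-integrable random variable taking values in the lattice {v₀ + Dk : k ∈ ℤ} with variance σ², then σ² ≥ (D²/4)·θ_Y, where θ_Y := Σ_{k∈ℤ} min(P(Y = v₀+Dk), P(Y = v₀+D(k+1))). -/
open MeasureTheory ProbabilityTheory Function

/-! Write `x k = v₀ + D k`, `f k = P(Y = x k)` and `μ = E[Y]`. Since `x k` and `x (k + 1)`
are `D` apart, `(x k - μ)² + (x (k + 1) - μ)² ≥ D² / 2`, so `min (f k) (f (k + 1)) · D² / 2`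
is at most `f k (x k - μ)² + f (k + 1) (x (k + 1) - μ)²`. Summing over `k` counts every term
`f k (x k - μ)²` twice, and the sum of these terms is at most `Var Y` because the events
`{Y = x k}` are disjoint. -/

lemma min_mul_sq_sub_le {a b x y : ℝ} (ha : 0 ≤ a) (hb : 0 ≤ b) :
    min a b * (x - y) ^ 2 ≤ 2 * (a * x ^ 2 + b * y ^ 2) := by
  have hxy : (x - y) ^ 2 ≤ 2 * (x ^ 2 + y ^ 2) := by nlinarith [sq_nonneg (x + y)]
  calc min a b * (x - y) ^ 2 ≤ min a b * (2 * (x ^ 2 + y ^ 2)) :=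
        mul_le_mul_of_nonneg_left hxy (le_min ha hb)
    _ ≤ 2 * (a * x ^ 2 + b * y ^ 2) := by
        nlinarith [min_le_left a b, min_le_right a b, sq_nonneg x, sq_nonneg y]

lemma tsum_le_two_mul_tsum_of_le_add_succ {u g : ℤ → ℝ} (hu : 0 ≤ u) (hg : Summable g)
    (hug : ∀ k, u k ≤ g k + g (k + 1)) : ∑' k, u k ≤ 2 * ∑' k, g k := by
  have hg₁ : Summable fun k => g (k + 1) := (Equiv.addRight (1 : ℤ)).summable_iff.2 hg
  calc ∑' k, u k ≤ ∑' k, (g k + g (k + 1)) :=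
        Summable.tsum_le_tsum hug (.of_nonneg_of_le hu hug (hg.add hg₁)) (hg.add hg₁)
    _ = 2 * ∑' k, g k := by
        rw [hg.tsum_add hg₁, two_mul, ← (Equiv.addRight (1 : ℤ)).tsum_eq g]
        rfl

section

variable {Ω ι : Type*} [MeasurableSpace Ω] [Countable ι] {P : Measure Ω} {Y : Ω → ℝ} {x : ι → ℝ}

lemma hasSum_measureReal_mul_setIntegral_iUnion (hY : AEMeasurable Y P) (hx : Injective x)
    (f : ℝ → ℝ) (hf : Integrable (fun ω => f (Y ω)) P) :
    HasSum (fun i => P.real {ω | Y ω = x i} * f (x i))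
      (∫ ω in ⋃ i, {ω | Y ω = x i}, f (Y ω) ∂P) := by
  have hmeas i : NullMeasurableSet {ω | Y ω = x i} P :=
    hY.nullMeasurableSet_preimage (measurableSet_singleton (x i))
  have hdisj : Pairwise (AEDisjoint P on fun i => {ω | Y ω = x i}) := fun i j hij =>
    Disjoint.aedisjoint <| Set.disjoint_left.2 fun ω hi hj => hij (hx (hi.symm.trans hj))
  have hterm i : ∫ ω in {ω | Y ω = x i}, f (Y ω) ∂P = P.real {ω | Y ω = x i} * f (x i) := by
    rw [setIntegral_congr_ae₀ (hmeas i) (.of_forall fun ω (hω : Y ω = x i) => by rw [hω]),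
      setIntegral_const, smul_eq_mul]
  simpa only [hterm] using hasSum_integral_iUnion_ae hmeas hdisj hf.integrableOn

lemma integrable_sq_sub_integral [IsFiniteMeasure P] (hY : MemLp Y 2 P) :
    Integrable (fun ω => (Y ω - P[Y]) ^ 2) P :=
  (hY.sub (memLp_const _)).integrable_sq

lemma summable_measureReal_mul_sq [IsProbabilityMeasure P]
    (hY : MemLp Y 2 P) (hx : Injective x) :
    Summable fun i => P.real {ω | Y ω = x i} * (x i - P[Y]) ^ 2 := by
  have h := hasSum_measureReal_mul_setIntegral_iUnion hY.aemeasurable hx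
    (fun y => (y - P[Y]) ^ 2) (integrable_sq_sub_integral hY)
  exact h.summable

lemma tsum_measureReal_mul_sq_le_variance [IsProbabilityMeasure P]
    (hY : MemLp Y 2 P) (hx : Injective x) :
    ∑' i, P.real {ω | Y ω = x i} * (x i - P[Y]) ^ 2 ≤ Var[Y; P] := by
  rw [(hasSum_measureReal_mul_setIntegral_iUnion hY.aemeasurable hx
    (fun y => (y - P[Y]) ^ 2) (integrable_sq_sub_integral hY)).tsum_eq,
    variance_eq_integral hY.aemeasurable]
  exact setIntegral_le_integral (integrable_sq_sub_integral hY) (.of_forall fun ω => sq_nonneg _)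

end

theorem variance_ge_theta_general {Ω : Type*} [MeasurableSpace Ω] (P : Measure Ω) [IsProbabilityMeasure P]
    (Y : Ω → ℝ) (hL2 : MemLp Y 2 P) (v₀ D : ℝ) :
    ProbabilityTheory.variance Y P ≥
      D ^ 2 / 4 * ∑' k : ℤ, min (P {ω | Y ω = v₀ + D * k}).toReal
        (P {ω | Y ω = v₀ + D * (k + 1)}).toReal := by
  rcases eq_or_ne D 0 with rfl | hD
  · simp [variance_nonneg]
  set x : ℤ → ℝ := fun k => v₀ + D * k
  have hx : Injective x := fun k l hkl => by simpa [x, hD] using hkl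
  set g : ℤ → ℝ := fun k => P.real {ω | Y ω = x k} * (x k - P[Y]) ^ 2
  have hpair (k : ℤ) : D ^ 2 / 2 * min (P {ω | Y ω = v₀ + D * k}).toReal
      (P {ω | Y ω = v₀ + D * (k + 1)}).toReal ≤ g k + g (k + 1) := by
    have hsucc : x (k + 1) = v₀ + D * (k + 1) := by simp only [x]; push_cast; ring
    have h := min_mul_sq_sub_le (x := x k - P[Y]) (y := x (k + 1) - P[Y])
      (measureReal_nonneg (μ := P) (s := {ω | Y ω = x k}))
      (measureReal_nonneg (μ := P) (s := {ω | Y ω = x (k + 1)}))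
    rw [show x k - P[Y] - (x (k + 1) - P[Y]) = -D by rw [hsucc]; ring] at h
    simp only [g, ← hsucc, ← measureReal_def]
    linarith
  calc D ^ 2 / 4 * ∑' k : ℤ, min (P {ω | Y ω = v₀ + D * k}).toReal
        (P {ω | Y ω = v₀ + D * (k + 1)}).toReal
      = (∑' k : ℤ, D ^ 2 / 2 * min (P {ω | Y ω = v₀ + D * k}).toReal
          (P {ω | Y ω = v₀ + D * (k + 1)}).toReal) / 2 := by rw [tsum_mul_left]; ring
    _ ≤ (2 * ∑' k, g k) / 2 := by
      gcongr
      exact tsum_le_two_mul_tsum_of_le_add_succ (fun k => by positivity)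
        (summable_measureReal_mul_sq hL2 hx) hpair
    _ ≤ Var[Y; P] := by linarith [tsum_measureReal_mul_sq_le_variance hL2 hx]

theorem variance_ge_theta {Ω : Type*} [MeasurableSpace Ω] (P : Measure Ω) [IsProbabilityMeasure P]
    (Y : Ω → ℝ) (hY : Measurable Y) (hL2 : MemLp Y 2 P) (v₀ D : ℝ) (hD : 0 < D)
    (hlat : P {ω | ∃ k : ℤ, Y ω = v₀ + D * k} = 1) :
    ProbabilityTheory.variance Y P ≥
      D ^ 2 / 4 * ∑' k : ℤ, min (P {ω | Y ω = v₀ + D * k}).toReal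
        (P {ω | Y ω = v₀ + D * (k + 1)}).toReal :=
  variance_ge_theta_general P Y hL2 v₀ D
end

section
/- Let X₁,...,X_n be independent square-integrable random variables, each taking values in the lattice {v₀ + Dk : k ∈ ℤ}. Then Var(X₁ + ... + X_n) ≥ (D²/4)·Σ_{j=1}^n θ_{X_j}, where θ_{X_j} = Σ_{k∈ℤ} min(P(X_j = v₀+Dk), P(X_j = v₀+D(k+1))). -/
/-!
Only the distribution of each `X j` matters, and by independence the variance of the sum is the
sum of the variances, so it suffices to bound `Var X` for a single law on `ℝ`. The mean `m` lies
within `D / 2` of the lattice point `v₀ + D k₀` nearest to it and at distance at least `D / 2` from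
every other lattice point. Send each `k` to `k` if `k < k₀` and to `k + 1` otherwise: this map
`ℤ → ℤ ∖ {k₀}` is injective and its value is `k` or `k + 1`, so `min (p k) (p (k + 1))` is at most
the mass of a lattice point other than `v₀ + D k₀`. Hence
`D² / 4 · θ ≤ ∑_{k ≠ k₀} p k (v₀ + D k - m)² ≤ E (X - m)² = Var X`.
-/

open MeasureTheory ProbabilityTheory Finset

lemma half_le_abs_intCast_sub_of_ne_round (y : ℝ) {j : ℤ} (hj : j ≠ round y) :
    1 / 2 ≤ |(j : ℝ) - y| := by
  have hround : |y - round y| ≤ 1 / 2 := abs_sub_round y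
  have hone : (1 : ℝ) ≤ |(j : ℝ) - round y| := by
    exact_mod_cast Int.one_le_abs (sub_ne_zero.mpr hj)
  linarith [abs_sub_le (j : ℝ) y (round y)]

lemma sq_div_four_le_sq_sub_of_ne_round {D : ℝ} (hD : D ≠ 0) (v₀ m : ℝ) {j : ℤ}
    (hj : j ≠ round ((m - v₀) / D)) : D ^ 2 / 4 ≤ (v₀ + D * j - m) ^ 2 := by
  have hdist := half_le_abs_intCast_sub_of_ne_round _ hj
  have hscale : v₀ + D * j - m = D * ((j : ℝ) - (m - v₀) / D) := by
    field_simp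
    ring
  calc D ^ 2 / 4 = (|D| * (1 / 2)) ^ 2 := by rw [mul_pow, sq_abs]; ring
    _ ≤ (|D| * |(j : ℝ) - (m - v₀) / D|) ^ 2 := by gcongr
    _ = (v₀ + D * j - m) ^ 2 := by rw [← abs_mul, sq_abs, hscale]

lemma mul_tsum_min_succ_le {p c : ℤ → ℝ} (hp : 0 ≤ p) {a : ℝ} (ha : 0 ≤ a) (k₀ : ℤ)
    (hc : ∀ j ≠ k₀, a ≤ c j) {B : ℝ} (hB : ∀ t : Finset ℤ, ∑ j ∈ t, p j * c j ≤ B) :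
    a * ∑' k, min (p k) (p (k + 1)) ≤ B := by
  set skip : ℤ → ℤ := fun k => if k₀ ≤ k then k + 1 else k
  have skip_inj : Function.Injective skip := by
    intro k l h
    simp only [skip] at h
    split_ifs at h <;> omega
  have skip_ne : ∀ k, skip k ≠ k₀ := by
    intro k
    simp only [skip]
    split_ifs <;> omega
  have min_le_skip : ∀ k, min (p k) (p (k + 1)) ≤ p (skip k) := by
    intro k
    simp only [skip]
    split_ifs
    exacts [min_le_right _ _, min_le_left _ _]
  rw [← tsum_mul_left]
  refine Real.tsum_le_of_sum_le (fun k => mul_nonneg ha (le_min (hp k) (hp (k + 1)))) fun s => ?_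
  calc ∑ k ∈ s, a * min (p k) (p (k + 1))
      ≤ ∑ k ∈ s, p (skip k) * c (skip k) := by
        refine sum_le_sum fun k _ => ?_
        rw [mul_comm]
        exact mul_le_mul (min_le_skip k) (hc _ (skip_ne k)) ha (hp _)
    _ = ∑ j ∈ s.image skip, p j * c j := by rw [sum_image skip_inj.injOn]
    _ ≤ B := hB _

lemma sum_measureReal_singleton_mul_le_integral {α : Type*} [MeasurableSpace α]
    [MeasurableSingletonClass α] {ν : Measure α} {g : α → ℝ} (hg₀ : 0 ≤ g) (hg : Integrable g ν)
    (t : Finset α) : ∑ x ∈ t, ν.real {x} * g x ≤ ∫ x, g x ∂ν := by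
  simp_rw [← smul_eq_mul, ← setIntegral_finset t hg.integrableOn]
  exact setIntegral_le_integral hg (.of_forall hg₀)

theorem mul_tsum_min_measureReal_le_variance (ν : Measure ℝ) [IsFiniteMeasure ν]
    (hν : MemLp id 2 ν) (v₀ : ℝ) {D : ℝ} (hD : D ≠ 0) :
    D ^ 2 / 4 * ∑' k : ℤ, min (ν.real {v₀ + D * k}) (ν.real {v₀ + D * (k + 1)}) ≤
      variance id ν := by
  set m := ν[id]
  have hsq : Integrable (fun x => (x - m) ^ 2) ν := (hν.sub (memLp_const m)).integrable_sq
  have hvar : variance id ν = ∫ x, (x - m) ^ 2 ∂ν :=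
    variance_eq_integral measurable_id.aemeasurable
  have hlattice_inj : Function.Injective fun k : ℤ => v₀ + D * k := fun k l h => by
    simpa [hD] using h
  have key := mul_tsum_min_succ_le (p := fun k : ℤ => ν.real {v₀ + D * k})
    (c := fun k : ℤ => (v₀ + D * k - m) ^ 2) (fun _ => measureReal_nonneg) (by positivity)
    (round ((m - v₀) / D)) (fun j hj => sq_div_four_le_sq_sub_of_ne_round hD v₀ m hj)
    (B := ∫ x, (x - m) ^ 2 ∂ν) fun t => by
      rw [← sum_image (f := fun x => ν.real {x} * (x - m) ^ 2) hlattice_inj.injOn]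
      exact sum_measureReal_singleton_mul_le_integral (fun x => sq_nonneg _) hsq _
  push_cast at key
  rwa [hvar]

theorem variance_sum_ge_theta_sum_general {Ω : Type*} [MeasurableSpace Ω] (P : Measure Ω)
    [IsProbabilityMeasure P] (n : ℕ) (X : Fin n → Ω → ℝ)
    (hindep : ProbabilityTheory.iIndepFun X P)
    (hL2 : ∀ j, MemLp (X j) 2 P) (v₀ D : ℝ) (hD : 0 < D) :
    ProbabilityTheory.variance (fun ω => ∑ j, X j ω) P ≥
      D ^ 2 / 4 * ∑ j, ∑' k : ℤ, min (P {ω | X j ω = v₀ + D * k}).toReal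
        (P {ω | X j ω = v₀ + D * (k + 1)}).toReal := by
  rw [← Finset.sum_fn, IndepFun.variance_sum (fun j _ => hL2 j)
    (fun i _ j _ hij => hindep.indepFun hij), mul_sum]
  gcongr with j
  have hX := (hL2 j).aestronglyMeasurable.aemeasurable
  have hlaw : MemLp id 2 (P.map (X j)) :=
    (memLp_map_measure_iff aestronglyMeasurable_id hX).2 (hL2 j)
  have hbound := mul_tsum_min_measureReal_le_variance _ hlaw v₀ hD.ne'
  rw [variance_id_map hX] at hbound
  simp only [map_measureReal_apply_of_aemeasurable hX (measurableSet_singleton _)] at hbound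
  exact hbound

theorem variance_sum_ge_theta_sum {Ω : Type*} [MeasurableSpace Ω] (P : Measure Ω)
    [IsProbabilityMeasure P] (n : ℕ) (X : Fin n → Ω → ℝ) (hmeas : ∀ j, Measurable (X j))
    (hindep : ProbabilityTheory.iIndepFun X P)
    (hL2 : ∀ j, MemLp (X j) 2 P) (v₀ D : ℝ) (hD : 0 < D)
    (hlat : ∀ j, P {ω | ∃ k : ℤ, X j ω = v₀ + D * k} = 1) :
    ProbabilityTheory.variance (fun ω => ∑ j, X j ω) P ≥
      D ^ 2 / 4 * ∑ j, ∑' k : ℤ, min (P {ω | X j ω = v₀ + D * k}).toReal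
        (P {ω | X j ω = v₀ + D * (k + 1)}).toReal :=
  variance_sum_ge_theta_sum_general P n X hindep hL2 v₀ D hD
end

section
/- Let X take values in the lattice {v₀ + Dk : k ∈ ℤ} with probabilities f(k) = P(X = v₀ + Dk), and let {τ_k}_{k∈ℤ} be nonnegative reals with τ_{k-1} + τ_k ≤ 2f(k) for all k and Σ_k τ_k = θ ∈ (0, 1]. Define a pair (V, ε) by P((V,ε) = (v₀+Dk, 1)) = τ_k and P((V,ε) = (v₀+Dk, 0)) = f(k) − (τ_{k-1}+τ_k)/2. If L is a Bernoulli(1/2) random variable independent of (V, ε), then Z = V + εDL has the same distribution as X. -/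
/-!
`V + εDL = v₀ + Dk` happens exactly when `(V, ε) = (v₀ + Dk, 0)`, or `(V, ε) = (v₀ + Dk, 1)` and
`L = 0`, or `(V, ε) = (v₀ + D(k-1), 1)` and `L = 1`. By independence the last two events have
probabilities `τ k / 2` and `τ (k-1) / 2`, which cancel the correction in `P((V, ε) = (v₀ + Dk, 0))`.
-/

open MeasureTheory ProbabilityTheory

lemma add_mul_mul_eq_iff_of_zero_or_one {v e d l x : ℝ} (he : e = 0 ∨ e = 1)
    (hl : l = 0 ∨ l = 1) :
    v + e * d * l = x ↔
      (v = x ∧ e = 0) ∨ ((v = x ∧ e = 1) ∧ l = 0) ∨ ((v = x - d ∧ e = 1) ∧ l = 1) := by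
  rcases he with rfl | rfl <;> rcases hl with rfl | rfl <;> norm_num
  exact eq_sub_iff_add_eq.symm

section Decomposition

variable {Ω : Type*} [MeasurableSpace Ω] (μ : Measure Ω) {V ε L : Ω → ℝ}

lemma measure_add_mul_mul_eq (hV : Measurable V) (hε : Measurable ε) (hL : Measurable L)
    (hεvals : ∀ ω, ε ω = 0 ∨ ε ω = 1) (hLvals : ∀ ω, L ω = 0 ∨ L ω = 1) (D x : ℝ) :
    μ {ω | V ω + ε ω * D * L ω = x} =
      μ {ω | V ω = x ∧ ε ω = 0} + (μ {ω | (V ω = x ∧ ε ω = 1) ∧ L ω = 0} +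
        μ {ω | (V ω = x - D ∧ ε ω = 1) ∧ L ω = 1}) := by
  have hset : {ω | V ω + ε ω * D * L ω = x} =
      {ω | V ω = x ∧ ε ω = 0} ∪ ({ω | (V ω = x ∧ ε ω = 1) ∧ L ω = 0} ∪
        {ω | (V ω = x - D ∧ ε ω = 1) ∧ L ω = 1}) := by
    ext ω
    exact add_mul_mul_eq_iff_of_zero_or_one (hεvals ω) (hLvals ω)
  have hmeas : ∀ a e l : ℝ, MeasurableSet {ω | (V ω = a ∧ ε ω = e) ∧ L ω = l} := fun a e l =>
    ((measurableSet_eq_fun hV measurable_const).inter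
      (measurableSet_eq_fun hε measurable_const)).inter (measurableSet_eq_fun hL measurable_const)
  rw [hset, measure_union _ ((hmeas _ _ _).union (hmeas _ _ _)), measure_union _ (hmeas _ _ _)]
  · exact Set.disjoint_left.2 fun ω hB hC => by norm_num [hB.2] at hC
  · refine Set.disjoint_left.2 fun ω hA hBC => ?_
    rcases hBC with hB | hC
    · norm_num [hA.2] at hB
    · norm_num [hA.2] at hC

end Decomposition

lemma ProbabilityTheory.IndepFun.measure_prod_eq_and_eq {Ω β γ δ : Type*} [MeasurableSpace Ω] {μ : Measure Ω}
    [MeasurableSpace β] [MeasurableSpace γ] [MeasurableSpace δ] [MeasurableSingletonClass β]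
    [MeasurableSingletonClass γ] [MeasurableSingletonClass δ] {V : Ω → β} {ε : Ω → γ}
    {L : Ω → δ} (h : IndepFun (fun ω => (V ω, ε ω)) L μ) (a : β) (e : γ) (l : δ) :
    μ {ω | (V ω = a ∧ ε ω = e) ∧ L ω = l} = μ {ω | V ω = a ∧ ε ω = e} * μ {ω | L ω = l} := by
  simpa [Set.preimage, Prod.ext_iff, Set.ofPred_and] using
    h.measure_inter_preimage_eq_mul {(a, e)} {l} (measurableSet_singleton _)
      (measurableSet_singleton _)

theorem bernoulli_part_representation_general {Ω : Type*} [MeasurableSpace Ω] (P : Measure Ω)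
    [IsProbabilityMeasure P] (V ε L : Ω → ℝ)
    (hV : Measurable V) (hε : Measurable ε) (hL : Measurable L)
    (v₀ D : ℝ) (f τ : ℤ → ℝ)
    (hεvals : ∀ ω, ε ω = 0 ∨ ε ω = 1)
    (hLvals : ∀ ω, L ω = 0 ∨ L ω = 1)
    (hL0 : (P {ω | L ω = 0}).toReal = 1 / 2) (hL1 : (P {ω | L ω = 1}).toReal = 1 / 2)
    (hjoint1 : ∀ k : ℤ, (P {ω | V ω = v₀ + D * k ∧ ε ω = 1}).toReal = τ k)
    (hjoint0 : ∀ k : ℤ, (P {ω | V ω = v₀ + D * k ∧ ε ω = 0}).toReal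
      = f k - (τ (k - 1) + τ k) / 2)
    (hindep : ProbabilityTheory.IndepFun (fun ω => (V ω, ε ω)) L P) :
    ∀ k : ℤ, (P {ω | V ω + ε ω * D * L ω = v₀ + D * k}).toReal = f k := by
  intro k
  have hprev : v₀ + D * k - D = v₀ + D * ((k - 1 : ℤ) : ℝ) := by push_cast; ring
  rw [measure_add_mul_mul_eq P hV hε hL hεvals hLvals, hprev,
    hindep.measure_prod_eq_and_eq, hindep.measure_prod_eq_and_eq,
    ENNReal.toReal_add (by finiteness) (by finiteness),
    ENNReal.toReal_add (by finiteness) (by finiteness), ENNReal.toReal_mul, ENNReal.toReal_mul,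
    hjoint0, hjoint1, hjoint1, hL0, hL1]
  ring

theorem bernoulli_part_representation {Ω : Type*} [MeasurableSpace Ω] (P : Measure Ω)
    [IsProbabilityMeasure P] (V ε L : Ω → ℝ)
    (hV : Measurable V) (hε : Measurable ε) (hL : Measurable L)
    (v₀ D : ℝ) (hD : 0 < D) (f τ : ℤ → ℝ) (θ : ℝ) (hθ0 : 0 < θ) (hθ1 : θ ≤ 1)
    (hτ0 : ∀ k, 0 ≤ τ k) (hτf : ∀ k : ℤ, τ (k - 1) + τ k ≤ 2 * f k)
    (hτθ : ∑' k : ℤ, τ k = θ)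
    (hεvals : ∀ ω, ε ω = 0 ∨ ε ω = 1)
    (hLvals : ∀ ω, L ω = 0 ∨ L ω = 1)
    (hL0 : (P {ω | L ω = 0}).toReal = 1 / 2) (hL1 : (P {ω | L ω = 1}).toReal = 1 / 2)
    (hjoint1 : ∀ k : ℤ, (P {ω | V ω = v₀ + D * k ∧ ε ω = 1}).toReal = τ k)
    (hjoint0 : ∀ k : ℤ, (P {ω | V ω = v₀ + D * k ∧ ε ω = 0}).toReal
      = f k - (τ (k - 1) + τ k) / 2)
    (hindep : ProbabilityTheory.IndepFun (fun ω => (V ω, ε ω)) L P) :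
    ∀ k : ℤ, (P {ω | V ω + ε ω * D * L ω = v₀ + D * k}).toReal = f k :=
  bernoulli_part_representation_general P V ε L hV hε hL v₀ D f τ hεvals hLvals hL0 hL1 hjoint1
    hjoint0 hindep
end

section
/- Let (f_n)_{n≥1} be a sequence of nonnegative real numbers such that for each r > 1 the averages r^{−k}·Σ_{n ≤ r^k} f_n converge as k → ∞. Then the limit L is the same for each r > 1, and lim_{N→∞} N^{−1}·Σ_{n≤N} f_n = L. -/
/-!
Since the partial sums `S N = ∑_{n ≤ N} f n` are nondecreasing and nonnegative, an index `N` with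
`t ^ k ≤ N < t ^ (k + 1)` has its average squeezed between `t⁻¹` times the `t`-geometric average at `k`
and `t` times the one at `k + 1`; so if the averages along powers of `t` tend to `L`, the ordinary
averages eventually lie within a factor `t` of `L`. Every `r > 1` is a power `t ^ j` of ratios `t`
arbitrarily close to `1`, and the `r`-averages are a subsequence of the `t`-averages, so all of these
share the limit along `r`; letting `t → 1` gives the convergence of the ordinary averages, and
uniqueness of that limit makes `L` independent of `r`.
-/

open Filter Topology

noncomputable def geometricAverage (S : ℕ → ℝ) (r : ℝ) (k : ℕ) : ℝ :=
  (r ^ k)⁻¹ * S ⌊r ^ k⌋₊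

section

variable {S : ℕ → ℝ} {t L : ℝ}

theorem tendsto_geometricAverage_pow {j : ℕ} (hj : j ≠ 0)
    (h : Tendsto (geometricAverage S t) atTop (𝓝 L)) :
    Tendsto (geometricAverage S (t ^ j)) atTop (𝓝 L) := by
  have hsub : geometricAverage S (t ^ j) = fun k => geometricAverage S t (j * k) :=
    funext fun k => by simp only [geometricAverage, pow_mul]
  rw [hsub]
  exact h.comp (tendsto_id.const_mul_atTop' (Nat.pos_of_ne_zero hj))

theorem frequently_pow_eq_nhdsGT_one {r : ℝ} (hr : 1 < r) :
    ∃ᶠ t in 𝓝[>] (1 : ℝ), ∃ j ≠ 0, t ^ j = r := by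
  rw [(nhdsGT_basis 1).frequently_iff]
  intro c hc
  obtain ⟨j, hrj⟩ := pow_unbounded_of_one_lt r hc
  have hj : j ≠ 0 := by
    rintro rfl
    exact absurd (hr.trans hrj) (by simp)
  have hroot : (r ^ ((j : ℝ)⁻¹)) ^ j = r := Real.rpow_inv_natCast_pow (by linarith) hj
  have hroot_gt : 1 < r ^ ((j : ℝ)⁻¹) := Real.one_lt_rpow hr (by positivity)
  refine ⟨r ^ ((j : ℝ)⁻¹), ⟨hroot_gt, ?_⟩, j, hj, hroot⟩
  exact (pow_lt_pow_iff_left₀ (by linarith) (by linarith) hj).1 (by rwa [hroot])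

theorem eventually_exists_pow_le_lt_pow (ht : 1 < t) (K : ℕ) :
    ∀ᶠ N : ℕ in atTop, ∃ k ≥ K, t ^ k ≤ N ∧ (N : ℝ) < t ^ (k + 1) := by
  filter_upwards [tendsto_natCast_atTop_atTop.eventually_ge_atTop (t ^ K)] with N hN
  obtain ⟨k, hk, hk'⟩ := exists_nat_pow_near ((one_le_pow₀ ht.le).trans hN) ht
  have hKk : K < k + 1 := (pow_lt_pow_iff_right₀ ht).1 (hN.trans_lt hk')
  exact ⟨k, by omega, hk, hk'⟩

variable (hS : Monotone S) (hS0 : 0 ≤ S)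
include hS hS0

theorem inv_mul_geometricAverage_le (ht : 1 < t) {N k : ℕ} (hk : t ^ k ≤ N)
    (hk' : (N : ℝ) < t ^ (k + 1)) :
    t⁻¹ * geometricAverage S t k ≤ (N : ℝ)⁻¹ * S N := by
  have hN : (0 : ℝ) < N := (pow_pos (by linarith) k).trans_le hk
  calc t⁻¹ * geometricAverage S t k = (t ^ (k + 1))⁻¹ * S ⌊t ^ k⌋₊ := by
        rw [geometricAverage, pow_succ, mul_inv]
        ring
    _ ≤ (N : ℝ)⁻¹ * S N :=
        mul_le_mul (inv_anti₀ hN hk'.le) (hS (Nat.floor_le_of_le hk)) (hS0 _) (by positivity)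

theorem le_mul_geometricAverage_succ (ht : 1 < t) {N k : ℕ} (hk : t ^ k ≤ N)
    (hk' : (N : ℝ) < t ^ (k + 1)) :
    (N : ℝ)⁻¹ * S N ≤ t * geometricAverage S t (k + 1) := by
  have htk : 0 < t ^ k := pow_pos (by linarith) k
  calc (N : ℝ)⁻¹ * S N ≤ (t ^ k)⁻¹ * S ⌊t ^ (k + 1)⌋₊ :=
        mul_le_mul (inv_anti₀ htk hk) (hS (Nat.le_floor hk'.le)) (hS0 _) (by positivity)
    _ = t * geometricAverage S t (k + 1) := by
        rw [geometricAverage, pow_succ, mul_inv, ← mul_assoc, mul_comm t, mul_assoc _ t⁻¹ t,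
          inv_mul_cancel₀ (by linarith), mul_one]

theorem eventually_average_lt (ht : 1 < t) (hL : Tendsto (geometricAverage S t) atTop (𝓝 L))
    {a : ℝ} (ha : L < a) :
    ∀ᶠ N : ℕ in atTop, (N : ℝ)⁻¹ * S N < t * a := by
  obtain ⟨K, hK⟩ := eventually_atTop.1 (hL.eventually_lt_const ha)
  filter_upwards [eventually_exists_pow_le_lt_pow ht K] with N ⟨k, hKk, hk, hk'⟩
  calc (N : ℝ)⁻¹ * S N ≤ t * geometricAverage S t (k + 1) :=
        le_mul_geometricAverage_succ hS hS0 ht hk hk'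
    _ < t * a := mul_lt_mul_of_pos_left (hK _ (by omega)) (by linarith)

theorem eventually_lt_average (ht : 1 < t) (hL : Tendsto (geometricAverage S t) atTop (𝓝 L))
    {b : ℝ} (hb : b < L) :
    ∀ᶠ N : ℕ in atTop, t⁻¹ * b < (N : ℝ)⁻¹ * S N := by
  obtain ⟨K, hK⟩ := eventually_atTop.1 (hL.eventually_const_lt hb)
  filter_upwards [eventually_exists_pow_le_lt_pow ht K] with N ⟨k, hKk, hk, hk'⟩
  calc t⁻¹ * b < t⁻¹ * geometricAverage S t k :=
        mul_lt_mul_of_pos_left (hK k hKk) (by positivity)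
    _ ≤ (N : ℝ)⁻¹ * S N := inv_mul_geometricAverage_le hS hS0 ht hk hk'

theorem tendsto_average_of_frequently_tendsto_geometricAverage
    (h : ∃ᶠ t in 𝓝[>] (1 : ℝ), Tendsto (geometricAverage S t) atTop (𝓝 L)) :
    Tendsto (fun N : ℕ => (N : ℝ)⁻¹ * S N) atTop (𝓝 L) := by
  have hnear : ∀ c : ℝ, Tendsto (fun t : ℝ => t * c) (𝓝[>] 1) (𝓝 c) ∧
      Tendsto (fun t : ℝ => t⁻¹ * c) (𝓝[>] 1) (𝓝 c) := by
    intro c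
    constructor
    · simpa using ((tendsto_id (x := 𝓝 (1 : ℝ))).mul_const c).mono_left nhdsWithin_le_nhds
    · simpa using ((tendsto_inv₀ (one_ne_zero (α := ℝ))).mul_const c).mono_left
        nhdsWithin_le_nhds
  rw [tendsto_order]
  constructor
  · intro b hb
    obtain ⟨c, hbc, hcL⟩ := exists_between hb
    obtain ⟨t, hL, ht, hct⟩ := (h.and_eventually
      (eventually_mem_nhdsWithin.and ((hnear c).2.eventually_const_lt hbc))).exists
    exact (eventually_lt_average hS hS0 ht hL hcL).mono fun N hN => hct.trans hN
  · intro a ha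
    obtain ⟨c, hLc, hca⟩ := exists_between ha
    obtain ⟨t, hL, ht, htc⟩ := (h.and_eventually
      (eventually_mem_nhdsWithin.and ((hnear c).1.eventually_lt_const hca))).exists
    exact (eventually_average_lt hS hS0 ht hL hLc).mono fun N hN => hN.trans htc

theorem tendsto_average_of_tendsto_geometricAverage
    (hconv : ∀ t : ℝ, 1 < t → ∃ L : ℝ, Tendsto (geometricAverage S t) atTop (𝓝 L))
    {r : ℝ} (hr : 1 < r) (hL : Tendsto (geometricAverage S r) atTop (𝓝 L)) :
    Tendsto (fun N : ℕ => (N : ℝ)⁻¹ * S N) atTop (𝓝 L) := by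
  refine tendsto_average_of_frequently_tendsto_geometricAverage hS hS0 <|
    (frequently_pow_eq_nhdsGT_one hr).mp <|
      eventually_nhdsWithin_of_forall fun t ht ⟨j, hj, htj⟩ => ?_
  obtain ⟨L', hL'⟩ := hconv t ht
  have hLL' : L = L' := tendsto_nhds_unique hL (htj ▸ tendsto_geometricAverage_pow hj hL')
  rwa [hLL']

end

theorem averages_along_geometric (f : ℕ → ℝ) (hf : ∀ n, 0 ≤ f n)
    (h : ∀ r : ℝ, 1 < r → ∃ L : ℝ, Filter.Tendsto
      (fun k : ℕ => (r ^ k)⁻¹ * ∑ n ∈ Finset.Icc 1 ⌊r ^ k⌋₊, f n)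
      Filter.atTop (nhds L)) :
    ∃ L : ℝ, (∀ r : ℝ, 1 < r → Filter.Tendsto
      (fun k : ℕ => (r ^ k)⁻¹ * ∑ n ∈ Finset.Icc 1 ⌊r ^ k⌋₊, f n)
      Filter.atTop (nhds L)) ∧
      Filter.Tendsto (fun N : ℕ => (N : ℝ)⁻¹ * ∑ n ∈ Finset.Icc 1 N, f n)
        Filter.atTop (nhds L) := by
  set S : ℕ → ℝ := fun N => ∑ n ∈ Finset.Icc 1 N, f n
  have hS : Monotone S := fun _ _ hab =>
    Finset.sum_le_sum_of_subset_of_nonneg (Finset.Icc_subset_Icc_right hab) fun n _ _ => hf n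
  have hS0 : 0 ≤ S := fun _ => Finset.sum_nonneg fun n _ => hf n
  have hconv : ∀ r : ℝ, 1 < r → ∃ L, Tendsto (geometricAverage S r) atTop (𝓝 L) := h
  obtain ⟨L, hL⟩ := hconv 2 one_lt_two
  have hN := tendsto_average_of_tendsto_geometricAverage hS hS0 hconv one_lt_two hL
  refine ⟨L, fun r hr => ?_, hN⟩
  obtain ⟨L', hL'⟩ := hconv r hr
  rwa [tendsto_nhds_unique (tendsto_average_of_tendsto_geometricAverage hS hS0 hconv hr hL') hN]
    at hL'
end

section
/- Suppose 0 < ϑ_j ≤ τ < 1 for all j, and let ν_n = Σ_{j=1}^n ϑ_j. Then for every M > 0 there is a constant C(τ, M) such that for all n > m ≥ 1, Π_{j=m+1}^n ϑ_j ≤ C(τ, M)/(ν_n − ν_m)^M. -/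
/-!
Since `t ↦ log t / t` is increasing on `(0, 1]`, every `ϑ_j` satisfies `ϑ_j ≤ exp (-c ϑ_j)` with
`c = log (1/τ) / τ > 0`, so the product over `m < j ≤ n` is at most `exp (-c S)` with
`S = ν_n - ν_m`. The bound then follows from `sup_{x > 0} x ^ M exp (-x) = M ^ M exp (-M)`.
-/

open Real Finset

lemma log_le_log_div_mul {t τ : ℝ} (ht : 0 < t) (htτ : t ≤ τ) (hτ : τ ≤ 1) :
    log t ≤ log τ / τ * t := by
  have hτ0 : 0 < τ := ht.trans_le htτ
  have hlogτ : log τ ≤ 0 := log_nonpos hτ0.le hτ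
  calc log t ≤ log τ := log_le_log ht htτ
    _ ≤ log τ * (t / τ) := le_mul_of_le_one_right hlogτ ((div_le_one hτ0).2 htτ)
    _ = log τ / τ * t := by ring

lemma le_exp_log_div_mul {t τ : ℝ} (ht : 0 < t) (htτ : t ≤ τ) (hτ : τ ≤ 1) :
    t ≤ exp (log τ / τ * t) :=
  calc t = exp (log t) := (exp_log ht).symm
    _ ≤ exp (log τ / τ * t) := exp_le_exp.2 (log_le_log_div_mul ht htτ hτ)

lemma prod_le_exp_log_div_mul_sum {ι : Type*} (s : Finset ι) {f : ι → ℝ} {τ : ℝ}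
    (hf : ∀ i ∈ s, 0 < f i ∧ f i ≤ τ) (hτ : τ ≤ 1) :
    ∏ i ∈ s, f i ≤ exp (log τ / τ * ∑ i ∈ s, f i) :=
  calc ∏ i ∈ s, f i ≤ ∏ i ∈ s, exp (log τ / τ * f i) :=
        prod_le_prod (fun i hi => (hf i hi).1.le)
          fun i hi => le_exp_log_div_mul (hf i hi).1 (hf i hi).2 hτ
    _ = exp (log τ / τ * ∑ i ∈ s, f i) := by rw [mul_sum, exp_sum]

lemma rpow_mul_exp_neg_le {M x : ℝ} (hM : 0 < M) (hx : 0 ≤ x) :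
    x ^ M * exp (-x) ≤ M ^ M * exp (-M) := by
  have hxM : (x / M) ^ M ≤ exp (x - M) :=
    calc (x / M) ^ M ≤ exp (x / M - 1) ^ M := by
          gcongr
          linarith [add_one_le_exp (x / M - 1)]
      _ = exp (x - M) := by rw [← exp_mul]; congr 1; field_simp
  calc x ^ M * exp (-x) = M ^ M * ((x / M) ^ M * exp (-x)) := by
        rw [div_rpow hx hM.le]; field_simp
    _ ≤ M ^ M * (exp (x - M) * exp (-x)) := by gcongr
    _ = M ^ M * exp (-M) := by rw [← exp_add]; ring_nf

lemma exp_neg_mul_le_div_rpow {M c S : ℝ} (hM : 0 < M) (hc : 0 < c) (hS : 0 < S) :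
    exp (-(c * S)) ≤ (M / c) ^ M * exp (-M) / S ^ M := by
  have h := rpow_mul_exp_neg_le hM (mul_pos hc hS).le
  rw [mul_rpow hc.le hS.le] at h
  rw [le_div_iff₀ (by positivity), div_rpow hM.le hc.le, div_mul_eq_mul_div,
    le_div_iff₀' (by positivity)]
  linarith

lemma sum_Icc_one_sub_sum_Icc_one {G : Type*} [AddCommGroup G] (f : ℕ → G) {m n : ℕ}
    (hmn : m ≤ n) : ∑ j ∈ Icc 1 n, f j - ∑ j ∈ Icc 1 m, f j = ∑ j ∈ Icc (m + 1) n, f j := by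
  rw [sub_eq_iff_eq_add', Icc_add_one_left_eq_Ioc, ← zero_add 1, Icc_add_one_left_eq_Ioc,
    Icc_add_one_left_eq_Ioc, sum_Ioc_consecutive f (Nat.zero_le m) hmn]

theorem prod_theta_bound (τ : ℝ) (hτ1 : τ < 1) (ϑ : ℕ → ℝ)
    (hϑ : ∀ j, 0 < ϑ j ∧ ϑ j ≤ τ)
    (ν : ℕ → ℝ) (hν : ∀ n, ν n = ∑ j ∈ Finset.Icc 1 n, ϑ j)
    (M : ℝ) (hM : 0 < M) :
    ∃ C : ℝ, 0 < C ∧ ∀ m n : ℕ, 1 ≤ m → m < n →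
      ∏ j ∈ Finset.Icc (m + 1) n, ϑ j ≤ C / (ν n - ν m) ^ M := by
  have hτ0 : 0 < τ := (hϑ 0).1.trans_le (hϑ 0).2
  set c := -log τ / τ
  have hc : 0 < c := div_pos (neg_pos.2 (log_neg hτ0 hτ1)) hτ0
  refine ⟨(M / c) ^ M * exp (-M), by positivity, fun m n _ hmn => ?_⟩
  have hS : ν n - ν m = ∑ j ∈ Icc (m + 1) n, ϑ j := by
    rw [hν, hν, sum_Icc_one_sub_sum_Icc_one ϑ hmn.le]
  have hSpos : 0 < ν n - ν m := by
    rw [hS]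
    exact sum_pos (fun j _ => (hϑ j).1) ⟨n, mem_Icc.2 ⟨hmn, le_rfl⟩⟩
  calc ∏ j ∈ Icc (m + 1) n, ϑ j ≤ exp (log τ / τ * (ν n - ν m)) := by
        rw [hS]; exact prod_le_exp_log_div_mul_sum _ (fun j _ => hϑ j) hτ1.le
    _ = exp (-(c * (ν n - ν m))) := by congr 1; ring
    _ ≤ (M / c) ^ M * exp (-M) / (ν n - ν m) ^ M := exp_neg_mul_le_div_rpow hM hc hSpos
end
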